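/- arXiv:2605.11241 — 5 statements merged into one kernel-verified Lean document; each statement's English description precedes it below -/
import Mathlib

section
/- Let G be a finite simple graph and f : V_G → ℝ a function that is nonzero on at least one vertex of every connected component of G. Then the number of weak nodal domains of f is at most the Urschel number of f (the minimum over all signings of f of the number of strong nodal domains), which in turn is at most the number of strong nodal domains of f. -/
open SimpleGraph

/-- The number of strong nodal domains of `f`: connected components of the subgraph
induced on the positive set plus those of the subgraph induced on the negative set. -/
noncomputable def SND {V : Type*} (G : SimpleGraph V) (f : V → ℝ) : ℕ :=
  Nat.card ((G.induce {v | 0 < f v}).ConnectedComponent) +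
  Nat.card ((G.induce {v | f v < 0}).ConnectedComponent)

/-- The number of weak nodal domains of `f`: connected components of the subgraph
induced on `{f ≥ 0}` (resp. `{f ≤ 0}`) containing at least one vertex where `f ≠ 0`. -/
noncomputable def WND {V : Type*} (G : SimpleGraph V) (f : V → ℝ) : ℕ :=
  Nat.card {c : (G.induce {v | 0 ≤ f v}).ConnectedComponent //
      ∃ v : {v | 0 ≤ f v}, (G.induce {v | 0 ≤ f v}).connectedComponentMk v = c ∧ f v.1 ≠ 0} +
  Nat.card {c : (G.induce {v | f v ≤ 0}).ConnectedComponent //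
      ∃ v : {v | f v ≤ 0}, (G.induce {v | f v ≤ 0}).connectedComponentMk v = c ∧ f v.1 ≠ 0}

/-- `g` is a partial signing of `f`: strictly positive where `f` is positive and strictly
negative where `f` is negative. -/
def IsPartialSigning {V : Type*} (f g : V → ℝ) : Prop :=
  ∀ v, (0 < f v → 0 < g v) ∧ (f v < 0 → g v < 0)

/-- `g` is a signing of `f`: a nowhere-zero partial signing of `f`. -/
def IsSigning {V : Type*} (f g : V → ℝ) : Prop :=
  (∀ v, g v ≠ 0) ∧ IsPartialSigning f g

/-- The Urschel number of `f`: the minimum number of strong nodal domains over all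
signings of `f`. -/
noncomputable def UN {V : Type*} (G : SimpleGraph V) (f : V → ℝ) : ℕ :=
  sInf (SND G '' {g | IsSigning f g})

/-!
A signing of `f` can be built one zero at a time: a zero vertex adjacent to a nonzero one takes
that neighbour's value, which only attaches it to an existing nodal domain, so `SND` cannot grow.
Connectedness of every component to a nonzero vertex guarantees such a zero exists while zeros
remain. Conversely, for any signing `g`, a weak nodal domain of `f` contains a vertex where
`f ≠ 0`, hence the strong nodal domain of `g` through it: weak domains of `f` are images of strong
domains of `g`.
-/

namespace SimpleGraph

variable {V : Type*} {G : SimpleGraph V}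

lemma card_connectedComponent_induce_insert_le [Finite V] {S : Set V} {a b : V} (hb : b ∈ S)
    (hab : G.Adj a b) :
    Nat.card (G.induce (insert a S)).ConnectedComponent ≤
      Nat.card (G.induce S).ConnectedComponent := by
  refine Nat.card_le_card_of_surjective
    (ConnectedComponent.map (G.induceHomOfLE (Set.subset_insert a S)).toHom) ?_
  rintro ⟨w, hw⟩
  rcases Set.mem_insert_iff.mp hw with rfl | hwS
  · refine ⟨(G.induce S).connectedComponentMk ⟨b, hb⟩, ConnectedComponent.sound ?_⟩
    exact Adj.reachable (G := G.induce (insert w S)) hab.symm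
  · exact ⟨(G.induce S).connectedComponentMk ⟨w, hwS⟩, rfl⟩

lemma card_connectedComponent_induce_meeting_le [Finite V] {S P : Set V} (Q : V → Prop)
    (hPS : P ⊆ S) (hQ : ∀ v ∈ S, Q v → v ∈ P) :
    Nat.card {c : (G.induce S).ConnectedComponent //
        ∃ v : S, (G.induce S).connectedComponentMk v = c ∧ Q v.1} ≤
      Nat.card (G.induce P).ConnectedComponent := by
  let φ := ConnectedComponent.map (G.induceHomOfLE hPS).toHom
  calc _ ≤ Nat.card (Set.range φ) := by
        refine Nat.card_mono (Set.toFinite _) ?_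
        rintro c ⟨⟨v, hvS⟩, rfl, hv⟩
        exact ⟨(G.induce P).connectedComponentMk ⟨v, hQ v hvS hv⟩, rfl⟩
    _ ≤ _ := Finite.card_range_le φ

end SimpleGraph

section NodalDomains

variable {V : Type*} {G : SimpleGraph V}

lemma IsPartialSigning.trans {f g h : V → ℝ} (hfg : IsPartialSigning f g)
    (hgh : IsPartialSigning g h) : IsPartialSigning f h :=
  fun v => ⟨fun hv => (hgh v).1 ((hfg v).1 hv), fun hv => (hgh v).2 ((hfg v).2 hv)⟩

lemma SND_neg (f : V → ℝ) : SND G (-f) = SND G f := by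
  have hpos : {v | 0 < (-f) v} = {v | f v < 0} := by ext; simp
  have hneg : {v | (-f) v < 0} = {v | 0 < f v} := by ext; simp
  rw [SND, SND, hpos, hneg, add_comm]

lemma SND_update_le_of_pos [Finite V] [DecidableEq V] {f : V → ℝ} {a b : V} (ha : f a = 0)
    (hab : G.Adj a b) (hb : 0 < f b) : SND G (Function.update f a (f b)) ≤ SND G f := by
  have hpos : {v | 0 < Function.update f a (f b) v} = insert a {v | 0 < f v} := by
    ext v; by_cases hv : v = a <;> simp [hv, hb]
  have hneg : {v | Function.update f a (f b) v < 0} = {v | f v < 0} := by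
    ext v; by_cases hv : v = a <;> simp [hv, ha, hb.le]
  rw [SND, SND, hpos, hneg]
  exact Nat.add_le_add_right
    (card_connectedComponent_induce_insert_le (S := {v | 0 < f v}) hb hab) _

lemma SND_update_le [Finite V] [DecidableEq V] {f : V → ℝ} {a b : V} (ha : f a = 0)
    (hab : G.Adj a b) (hb : f b ≠ 0) : SND G (Function.update f a (f b)) ≤ SND G f := by
  rcases hb.lt_or_gt with hb | hb
  · have key := SND_update_le_of_pos (f := -f) (by simp [ha]) hab (by simpa using hb)
    have hupd : Function.update (-f) a ((-f) b) = -Function.update f a (f b) := by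
      ext v; by_cases hv : v = a <;> simp [hv]
    rwa [hupd, SND_neg, SND_neg] at key
  · exact SND_update_le_of_pos ha hab hb

theorem exists_isSigning_SND_le [Finite V] (f : V → ℝ)
    (h : ∀ v : V, ∃ u : V, G.Reachable v u ∧ f u ≠ 0) :
    ∃ g, IsSigning f g ∧ SND G g ≤ SND G f := by
  classical
  induction hn : {v | f v = 0}.ncard generalizing f with
  | zero =>
    have hf : ∀ v, f v ≠ 0 := fun v hv =>
      (Set.ncard_eq_zero (Set.toFinite _)).mp hn |>.subset hv
    exact ⟨f, ⟨hf, fun _ => ⟨id, id⟩⟩, le_rfl⟩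
  | succ n ih =>
    obtain ⟨v₀, hv₀⟩ := Set.nonempty_of_ncard_ne_zero (by rw [hn]; exact n.succ_ne_zero)
    obtain ⟨u, ⟨p⟩, hu⟩ := h v₀
    obtain ⟨⟨⟨a, b⟩, hab⟩, -, ha : f a = 0, hb : f b ≠ 0⟩ :=
      p.exists_boundary_dart {v | f v = 0} hv₀ hu
    set f' := Function.update f a (f b)
    have hf' : ∀ v, f v ≠ 0 → f' v = f v := fun v hv =>
      Function.update_of_ne (fun hva : v = a => hv (hva ▸ ha)) _ _
    have hzeros : {v | f' v = 0} = {v | f v = 0} \ {a} := by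
      ext v; by_cases hv : v = a <;> simp [f', hv, hb]
    have hn' : {v | f' v = 0}.ncard = n := by
      rw [hzeros, Set.ncard_sdiff_singleton_of_mem (s := {v | f v = 0}) ha, hn, Nat.add_sub_cancel]
    obtain ⟨g, ⟨hg0, hf'g⟩, hSND⟩ :=
      ih f' (fun v => (h v).imp fun u ⟨hvu, hu⟩ => ⟨hvu, hf' u hu ▸ hu⟩) hn'
    have hff' : IsPartialSigning f f' := fun v =>
      ⟨fun hv => hf' v hv.ne' ▸ hv, fun hv => hf' v hv.ne ▸ hv⟩
    exact ⟨g, ⟨hg0, hff'.trans hf'g⟩, hSND.trans (SND_update_le ha hab hb)⟩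

lemma WND_le_SND_of_isPartialSigning [Finite V] {f g : V → ℝ} (hfg : IsPartialSigning f g) :
    WND G f ≤ SND G g := by
  refine Nat.add_le_add (card_connectedComponent_induce_meeting_le (f · ≠ 0) ?_ ?_)
    (card_connectedComponent_induce_meeting_le (f · ≠ 0) ?_ ?_)
  · exact fun v hv => le_of_not_gt fun hfv => hv.not_gt ((hfg v).2 hfv)
  · exact fun v hv hfv => (hfg v).1 (lt_of_le_of_ne hv (Ne.symm hfv))
  · exact fun v hv => le_of_not_gt fun hfv => hv.not_gt ((hfg v).1 hfv)
  · exact fun v hv hfv => (hfg v).2 (lt_of_le_of_ne hv hfv)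

end NodalDomains

/-- If `f` is nonzero somewhere on every connected component of the finite
simple graph `G`, then `WND f ≤ UN f ≤ SND f`. -/
theorem stmt_0 {V : Type*} [Fintype V] (G : SimpleGraph V) (f : V → ℝ)
    (h : ∀ v : V, ∃ u : V, G.Reachable v u ∧ f u ≠ 0) :
    WND G f ≤ UN G f ∧ UN G f ≤ SND G f := by
  obtain ⟨g₀, hg₀, hSND⟩ := exists_isSigning_SND_le f h
  have hmem : SND G g₀ ∈ SND G '' {g | IsSigning f g} := ⟨g₀, hg₀, rfl⟩
  refine ⟨le_csInf ⟨_, hmem⟩ ?_, (Nat.sInf_le hmem).trans hSND⟩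
  rintro _ ⟨g, ⟨-, hfg⟩, rfl⟩
  exact WND_le_SND_of_isPartialSigning hfg
end

section
/- Let E ⊂ ℝⁿ be a subspace of dimension m with orthogonal projection P : ℝⁿ → ℝⁿ onto E. Then there exists a diagonal matrix D such that the symmetric operator PDP restricted to E has m distinct nonzero eigenvalues. -/
/-!
Choose `m` linearly independent columns of `P`; they span `E`, and collecting them in `U`
gives `P D P = U C Uᵀ` whenever `D` has diagonal weights `c` on the chosen coordinates and `0`
elsewhere (`C = diagonal c`). In the basis given by the columns of `U`, the restriction of `P D P`
to `E` is `C G` with `G = Uᵀ U` positive definite, so it suffices to find `c` for which `C G` has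
`m` distinct nonzero eigenvalues. This goes by induction on `m`: with last weight `0`, the
characteristic polynomial of `C G` is `X` times that of the leading block, so it has `m` simple
real roots. Simple real roots change sign, so by continuity and the intermediate value theorem
they persist as `m` distinct roots for a small nonzero last weight.
-/

open Filter Topology Set Polynomial Matrix

theorem Polynomial.Monic.eq_prod_X_sub_C_of_isRoot {K ι : Type*} [Field K] [Fintype ι]
    {p : K[X]} (hp : p.Monic) (hdeg : p.natDegree = Fintype.card ι) {μ : ι → K}
    (hμ : Function.Injective μ) (hroot : ∀ i, p.IsRoot (μ i)) :
    p = ∏ i, (X - C (μ i)) := by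
  refine eq_of_monic_of_dvd_of_natDegree_le (monic_prod_of_monic _ _ fun i _ ↦ monic_X_sub_C _)
    hp (Fintype.prod_dvd_of_coprime (pairwise_coprime_X_sub_C hμ)
      fun i ↦ dvd_iff_isRoot.mpr (hroot i)) ?_
  rw [natDegree_prod_of_monic _ _ fun i _ ↦ monic_X_sub_C _, hdeg]
  simp

theorem Polynomial.isRoot_prod_X_sub_C {R ι : Type*} [CommRing R] [IsDomain R] [Fintype ι]
    (ν : ι → R) (i : ι) : (∏ j, (X - C (ν j))).IsRoot (ν i) :=
  (isRoot_prod _ _ _).mpr ⟨i, Finset.mem_univ _, by simp⟩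

theorem Matrix.exists_mulVec_eq_smul_of_isRoot_charpoly {K n : Type*} [Field K] [Fintype n]
    [DecidableEq n] {M : Matrix n n K} {μ : K} (hμ : M.charpoly.IsRoot μ) :
    ∃ v ≠ 0, M *ᵥ v = μ • v := by
  rw [IsRoot, eval_charpoly, ← exists_mulVec_eq_zero_iff] at hμ
  obtain ⟨v, hv, hMv⟩ := hμ
  refine ⟨v, hv, ?_⟩
  rw [sub_mulVec, sub_eq_zero] at hMv
  rw [← hMv]
  ext i
  simp [mulVec_diagonal]

theorem Matrix.not_isRoot_charpoly_zero {K n : Type*} [Field K] [Fintype n] [DecidableEq n]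
    {M : Matrix n n K} (hM : M.det ≠ 0) : ¬ M.charpoly.IsRoot 0 := by
  rw [IsRoot, eval_charpoly, scalar_apply, diagonal_zero, zero_sub, det_neg]
  simp [hM]

theorem Matrix.charpoly_eq_X_mul_charpoly_submatrix_castSucc {R : Type*} [CommRing R] {k : ℕ}
    (M : Matrix (Fin (k + 1)) (Fin (k + 1)) R) (hM : ∀ j, M (Fin.last k) j = 0) :
    M.charpoly = X * (M.submatrix Fin.castSucc Fin.castSucc).charpoly := by
  rw [charpoly, det_succ_row _ (Fin.last k), Fintype.sum_eq_single (Fin.last k)]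
  · have hsub : (charmatrix M).submatrix Fin.castSucc Fin.castSucc =
        charmatrix (M.submatrix Fin.castSucc Fin.castSucc) := by
      ext i j
      by_cases h : i = j <;> simp [h]
    rw [charmatrix_apply, hM, Fin.succAbove_last, hsub, Fin.val_last, Even.neg_one_pow ⟨k, rfl⟩]
    simp [charpoly]
  · intro j hj
    simp [hM, hj.symm]

theorem eventually_exists_zero_mem_Ioo {p : ℝ → ℝ → ℝ} (hp₀ : ∀ s, ContinuousAt (p · s) 0)
    (hp : ∀ ε, Continuous (p ε)) {a b : ℝ} (hab : a < b) (hsign : p 0 a * p 0 b < 0) :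
    ∀ᶠ ε in 𝓝 0, ∃ s ∈ Ioo a b, p ε s = 0 := by
  have hcont : ContinuousAt (fun ε ↦ p ε a * p ε b) 0 := (hp₀ a).mul (hp₀ b)
  filter_upwards [hcont.eventually_lt continuousAt_const hsign] with ε hε
  rcases mul_neg_iff.mp hε with ⟨ha, hb⟩ | ⟨ha, hb⟩
  · exact intermediate_value_Ioo' hab.le (hp ε).continuousOn ⟨hb, ha⟩
  · exact intermediate_value_Ioo hab.le (hp ε).continuousOn ⟨ha, hb⟩

theorem eventually_prod_sub_mul_prod_sub_neg {ι : Type*} [Fintype ι] [DecidableEq ι]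
    {ν : ι → ℝ} (hν : Function.Injective ν) (b : ι) :
    ∀ᶠ δ in 𝓝[>] 0, (∏ i, (ν b - δ - ν i)) * ∏ i, (ν b + δ - ν i) < 0 := by
  set q : ℝ → ℝ := fun s ↦ ∏ i ∈ Finset.univ.erase b, (s - ν i)
  have hq : 0 < q (ν b) * q (ν b) := by
    refine mul_self_pos.mpr (Finset.prod_ne_zero_iff.mpr fun i hi ↦ sub_ne_zero.mpr ?_)
    exact fun h ↦ Finset.ne_of_mem_erase hi (hν h).symm
  have hcont : ContinuousAt (fun δ ↦ q (ν b - δ) * q (ν b + δ)) 0 := by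
    simp only [q]
    fun_prop
  have hev := continuousAt_const.eventually_lt hcont (by simpa only [sub_zero, add_zero] using hq)
  filter_upwards [nhdsWithin_le_nhds hev, self_mem_nhdsWithin] with δ hδ (hδpos : 0 < δ)
  rw [← Finset.mul_prod_erase _ _ (Finset.mem_univ b),
    ← Finset.mul_prod_erase _ _ (Finset.mem_univ b)]
  change (ν b - δ - ν b) * q (ν b - δ) * ((ν b + δ - ν b) * q (ν b + δ)) < 0
  nlinarith [mul_pos hδpos hδpos]

theorem eventually_exists_injective_zeros {ι : Type*} [Fintype ι] {p : ℝ → ℝ → ℝ}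
    (hp₀ : ∀ s, ContinuousAt (p · s) 0) (hp : ∀ ε, Continuous (p ε)) {ν : ι → ℝ}
    (hν : Function.Injective ν) (hp₀ν : ∀ s, p 0 s = ∏ i, (s - ν i)) :
    ∀ᶠ ε in 𝓝 0, ∃ μ : ι → ℝ, Function.Injective μ ∧ ∀ i, p ε (μ i) = 0 := by
  classical
  have hsign : ∀ᶠ δ in 𝓝[>] 0, ∀ b, p 0 (ν b - δ) * p 0 (ν b + δ) < 0 := by
    simpa only [hp₀ν, eventually_all] using fun b ↦ eventually_prod_sub_mul_prod_sub_neg hν b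
  have hsep : ∀ᶠ δ in 𝓝[>] 0, ∀ b b', b ≠ b' → δ < |ν b - ν b'| / 2 := by
    simp only [eventually_all]
    intro b b' hbb'
    have : 0 < |ν b - ν b'| := abs_pos.mpr (sub_ne_zero.mpr (hν.ne hbb'))
    exact nhdsWithin_le_nhds (eventually_lt_nhds (half_pos this))
  obtain ⟨δ, hsign, hsep, hδ : 0 < δ⟩ := (hsign.and (hsep.and self_mem_nhdsWithin)).exists
  have hroots : ∀ᶠ ε in 𝓝 0, ∀ b, ∃ s ∈ Ioo (ν b - δ) (ν b + δ), p ε s = 0 :=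
    eventually_all.mpr fun b ↦ eventually_exists_zero_mem_Ioo hp₀ hp (by linarith) (hsign b)
  filter_upwards [hroots] with ε hε
  choose μ hμ hμroot using hε
  refine ⟨μ, fun b b' hbb' ↦ of_not_not fun hne ↦ ?_, hμroot⟩
  have h1 := hμ b
  have h2 := hμ b'
  rw [hbb'] at h1
  have hclose : |ν b - ν b'| < 2 * δ :=
    abs_sub_lt_iff.mpr ⟨by linarith [h1.1, h2.2], by linarith [h1.2, h2.1]⟩
  linarith [hsep b b' hne]

theorem exists_diagonal_mul_charpoly_eq_prod_X_sub_C {m : ℕ} (G : Matrix (Fin m) (Fin m) ℝ)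
    (hG : ∀ k (hk : k ≤ m), (G.submatrix (Fin.castLE hk) (Fin.castLE hk)).det ≠ 0) :
    ∃ c ν : Fin m → ℝ, (∀ i, c i ≠ 0) ∧ Function.Injective ν ∧ (∀ i, ν i ≠ 0) ∧
      (diagonal c * G).charpoly = ∏ i, (X - C (ν i)) := by
  induction m with
  | zero => exact ⟨Fin.elim0, Fin.elim0, (·.elim0), (·.elim0), (·.elim0), by simp [charpoly]⟩
  | succ k ih =>
    set G' := G.submatrix Fin.castSucc Fin.castSucc
    obtain ⟨c, ν, hc, hν, hν0, hchar⟩ := ih G' fun j hj ↦ by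
      simpa [G', submatrix_submatrix, Function.comp_def] using hG j (hj.trans k.le_succ)
    set p : ℝ → ℝ → ℝ := fun ε s ↦ (diagonal (Fin.snoc c ε) * G).charpoly.eval s
    have hp₀ : ∀ s, ContinuousAt (p · s) 0 := by
      intro s
      simp only [p, eval_charpoly]
      refine (Continuous.matrix_det (continuous_matrix fun i j ↦ ?_)).continuousAt
      simp only [Matrix.sub_apply, diagonal_mul]
      have hsnoc : Continuous fun ε : ℝ ↦ (Fin.snoc c ε : Fin (k + 1) → ℝ) :=
        continuous_const.finSnoc continuous_id
      have := (continuous_apply i).comp hsnoc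
      fun_prop
    have hp : ∀ ε, Continuous (p ε) := fun ε ↦ Polynomial.continuous _
    have hp₀ν : ∀ s, p 0 s = ∏ i, (s - (Fin.snoc ν 0 : Fin (k + 1) → ℝ) i) := by
      intro s
      have hsub : (diagonal (Fin.snoc c 0) * G).submatrix Fin.castSucc Fin.castSucc =
          diagonal c * G' := by
        ext i j
        simp [diagonal_mul, G']
      simp only [p]
      rw [charpoly_eq_X_mul_charpoly_submatrix_castSucc _ (by simp [diagonal_mul]), hsub, hchar,
        Fin.prod_univ_castSucc]
      simp [eval_prod, mul_comm]
    have hinj : Function.Injective (Fin.snoc ν 0 : Fin (k + 1) → ℝ) :=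
      Fin.snoc_injective_iff.mpr ⟨hν, fun ⟨i, hi⟩ ↦ hν0 i hi⟩
    have hroots : ∀ᶠ ε in 𝓝[≠] 0,
        ∃ μ : Fin (k + 1) → ℝ, Function.Injective μ ∧ ∀ i, p ε (μ i) = 0 :=
      nhdsWithin_le_nhds (eventually_exists_injective_zeros hp₀ hp hinj hp₀ν)
    obtain ⟨ε, ⟨μ, hμ, hroot⟩, hε⟩ := (hroots.and self_mem_nhdsWithin).exists
    have hc' : ∀ i, (Fin.snoc c ε : Fin (k + 1) → ℝ) i ≠ 0 := fun i ↦ by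
      induction i using Fin.lastCases <;> simp_all
    have hdet : (diagonal (Fin.snoc c ε) * G).det ≠ 0 := by
      rw [det_mul, det_diagonal]
      exact mul_ne_zero (Finset.prod_ne_zero_iff.mpr fun i _ ↦ hc' i) (by simpa using hG _ le_rfl)
    refine ⟨Fin.snoc c ε, μ, hc', hμ, fun i hi ↦ not_isRoot_charpoly_zero hdet (hi ▸ hroot i), ?_⟩
    exact (charpoly_monic _).eq_prod_X_sub_C_of_isRoot (by simp) hμ hroot

theorem exists_linearIndependent_comp_fin {K V ι : Type*} [DivisionRing K] [AddCommGroup V]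
    [Module K V] [Module.Finite K V] (v : ι → V) {m : ℕ}
    (hm : Module.finrank K (Submodule.span K (Set.range v)) = m) :
    ∃ σ : Fin m → ι, LinearIndependent K (v ∘ σ) := by
  obtain ⟨κ, a, -, hspan, hli⟩ := exists_linearIndependent' K v
  have := hli.finite
  have := Fintype.ofFinite κ
  rw [← hspan, finrank_span_eq_card hli] at hm
  exact ⟨a ∘ (Fintype.equivFinOfCardEq hm).symm, hli.comp _ (Equiv.injective _)⟩

theorem Matrix.span_col_eq_of_mulVec_eq_self_iff {R n : Type*} [CommRing R] [Fintype n]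
    {P : Matrix n n R} (hP : P * P = P) {E : Submodule R (n → R)}
    (hE : ∀ x, x ∈ E ↔ P *ᵥ x = x) : Submodule.span R (Set.range P.col) = E := by
  rw [← range_mulVecLin]
  ext x
  refine ⟨?_, fun hx ↦ ⟨x, (hE x).mp hx⟩⟩
  rintro ⟨y, rfl⟩
  rw [hE, mulVecLin_apply, mulVec_mulVec, hP]

theorem Matrix.isDiag_submatrix_one_mul_diagonal_mul_transpose {R n m : Type*} [CommRing R]
    [Fintype m] [DecidableEq m] [DecidableEq n] (σ : m → n) (c : m → R) :
    ((1 : Matrix n n R).submatrix id σ * diagonal c *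
      ((1 : Matrix n n R).submatrix id σ)ᵀ).IsDiag := by
  intro a b hab
  refine Finset.sum_eq_zero fun j _ ↦ ?_
  by_cases ha : a = σ j <;> by_cases hb : b = σ j <;> simp_all [one_apply]

/-- if `E ⊆ ℝⁿ` is an `m`-dimensional subspace and `P` is the orthogonal
projection onto `E` (symmetric, idempotent, with fixed-point set `E`), then there is a
diagonal matrix `D` such that `P D P`, restricted to `E`, has `m` distinct nonzero
eigenvalues (each with an eigenvector lying in `E`). -/
theorem stmt_6 (n m : ℕ) (E : Submodule ℝ (Fin n → ℝ)) (hE : Module.finrank ℝ E = m)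
    (P : Matrix (Fin n) (Fin n) ℝ) (hPsymm : Pᵀ = P) (hPidem : P * P = P)
    (hPproj : ∀ x : Fin n → ℝ, x ∈ E ↔ P.mulVec x = x) :
    ∃ D : Matrix (Fin n) (Fin n) ℝ, D.IsDiag ∧
      ∃ μ : Fin m → ℝ, Function.Injective μ ∧ (∀ i, μ i ≠ 0) ∧
        ∀ i, ∃ v ∈ E, v ≠ 0 ∧ (P * D * P).mulVec v = μ i • v := by
  classical
  obtain ⟨σ, hσ⟩ := exists_linearIndependent_comp_fin P.col (m := m)
    (by rw [span_col_eq_of_mulVec_eq_self_iff hPidem hPproj, hE])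
  set S := (1 : Matrix (Fin n) (Fin n) ℝ).submatrix id σ
  set U := P * S
  have hU : Function.Injective U.mulVec := by
    have hcol : U.col = P.col ∘ σ := by
      ext j a
      simp [U, S, mul_apply, one_apply]
    rw [mulVec_injective_iff, hcol]
    exact hσ
  have hPU : P * U = U := by rw [← Matrix.mul_assoc, hPidem]
  have hUt : Sᵀ * P = Uᵀ := by rw [transpose_mul, hPsymm]
  have hG : (Uᵀ * U).PosDef := by simpa using PosDef.conjTranspose_mul_self U hU
  obtain ⟨c, ν, -, hν, hν0, hchar⟩ := exists_diagonal_mul_charpoly_eq_prod_X_sub_C (Uᵀ * U)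
    fun k hk ↦ (hG.submatrix (Fin.castLE_injective hk)).det_pos.ne'
  refine ⟨S * diagonal c * Sᵀ, isDiag_submatrix_one_mul_diagonal_mul_transpose σ c, ν, hν, hν0,
    fun i ↦ ?_⟩
  obtain ⟨y, hy, hGy⟩ := exists_mulVec_eq_smul_of_isRoot_charpoly (hchar ▸ isRoot_prod_X_sub_C ν i)
  refine ⟨U *ᵥ y, (hPproj _).mpr (by rw [mulVec_mulVec, hPU]),
    fun h ↦ hy (hU (h.trans (mulVec_zero U).symm)), ?_⟩
  calc (P * (S * diagonal c * Sᵀ) * P) *ᵥ (U *ᵥ y) = U *ᵥ ((diagonal c * (Uᵀ * U)) *ᵥ y) := by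
        simp only [U, mulVec_mulVec, Matrix.mul_assoc, hUt]
    _ = ν i • U *ᵥ y := by rw [hGy, mulVec_smul]
end

section
/- Let w_1, …, w_m ∈ ℝᵐ be linearly independent. Then there exists a constant C > 0 such that whenever d_1 > 0 and d_{i+1} > C·d_i for all i ∈ {1,…,m−1}, the symmetric matrix W = Σ_{i=1}^m d_i w_i w_iᵀ has m distinct eigenvalues. -/
/-!
Put `B = ∑ ‖wᵢ‖²` and let `c > 0` be such that `c ‖x‖² ≤ ∑ ⟪wᵢ, x⟫²` (it exists because the `wᵢ`
span `ℝᵐ`). If `d` is increasing and positive, the quadratic form `⟪W x, x⟫ = ∑ dᵢ ⟪wᵢ, x⟫²` is at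
most `B dⱼ ‖x‖²` on `{x ⊥ wᵢ, i > j}`, of dimension `≥ j + 1`, and at least `c dⱼ ‖x‖²` on
`{x ⊥ wᵢ, i < j}`, of dimension `≥ m - j`. Since these dimensions add up to more than `m`,
counting eigenvalues against them (as in the Courant–Fischer theorem) yields an eigenvalue in
`[c dⱼ, B dⱼ]`. When `dⱼ₊₁ > C dⱼ` with `C ≥ B / c`, these intervals are pairwise disjoint.
-/

open Module Finset Matrix
open scoped RealInnerProductSpace

theorem sum_mul_sq_le_mul_sum_sq {ι : Type*} [Fintype ι] {d c : ι → ℝ} {D : ℝ}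
    (hD : ∀ i, c i ≠ 0 → d i ≤ D) :
    ∑ i, d i * c i ^ 2 ≤ D * ∑ i, c i ^ 2 := by
  rw [mul_sum]
  refine sum_le_sum fun i _ => ?_
  by_cases hi : c i = 0
  · simp [hi]
  · exact mul_le_mul_of_nonneg_right (hD i hi) (sq_nonneg _)

theorem mul_sum_sq_le_sum_mul_sq {ι : Type*} [Fintype ι] {d c : ι → ℝ} {D : ℝ}
    (hD : ∀ i, c i ≠ 0 → D ≤ d i) :
    D * ∑ i, c i ^ 2 ≤ ∑ i, d i * c i ^ 2 := by
  rw [mul_sum]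
  refine sum_le_sum fun i _ => ?_
  by_cases hi : c i = 0
  · simp [hi]
  · exact mul_le_mul_of_nonneg_right (hD i hi) (sq_nonneg _)

theorem Fin.strictMono_of_lt_add_one {m : ℕ} {α : Type*} [Preorder α] {f : Fin m → α}
    (h : ∀ (i : Fin m) (hi : (i : ℕ) + 1 < m), f i < f ⟨i + 1, hi⟩) : StrictMono f := by
  cases m with
  | zero => exact fun i => i.elim0
  | succ n => exact Fin.strictMono_iff_lt_succ.2 fun i => h i.castSucc (by simp)

theorem Fin.pos_of_mul_lt_add_one {m : ℕ} {d : Fin m → ℝ} {C : ℝ} (hC : 0 ≤ C)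
    (h0 : ∀ i : Fin m, (i : ℕ) = 0 → 0 < d i)
    (h : ∀ (i : Fin m) (hi : (i : ℕ) + 1 < m), C * d i < d ⟨i + 1, hi⟩) (i : Fin m) :
    0 < d i := by
  obtain ⟨k, hk⟩ := i
  induction k with
  | zero => exact h0 _ rfl
  | succ k ih => exact (mul_nonneg hC (ih (by omega)).le).trans_lt (h ⟨k, by omega⟩ hk)

variable {ι E : Type*} [NormedAddCommGroup E] [InnerProductSpace ℝ E]

theorem OrthonormalBasis.finrank_le_card_filter_nonpos [Fintype ι] (b : OrthonormalBasis ι ℝ E)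
    (g : ι → ℝ) (U : Submodule ℝ E) (hU : ∀ x ∈ U, ∑ i, g i * ⟪b i, x⟫ ^ 2 ≤ 0) :
    finrank ℝ U ≤ #{i | g i ≤ 0} := by
  classical
  let f : U →ₗ[ℝ] ({i | g i ≤ 0} : Finset ι) → ℝ :=
    LinearMap.pi (fun i => innerₛₗ ℝ (b i)) ∘ₗ U.subtype
  have hf : Function.Injective f := by
    rw [← LinearMap.ker_eq_bot, LinearMap.ker_eq_bot']
    rintro ⟨x, hxU⟩ hx
    have hnonpos : ∀ i, g i ≤ 0 → ⟪b i, x⟫ = 0 := fun i hi =>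
      congrFun hx ⟨i, by simpa using hi⟩
    have hterm : ∀ i, 0 ≤ g i * ⟪b i, x⟫ ^ 2 := fun i => by
      rcases le_or_gt (g i) 0 with h | h
      · simp [hnonpos i h]
      · positivity
    have hzero := (sum_eq_zero_iff_of_nonneg fun i _ => hterm i).1
      ((hU x hxU).antisymm (sum_nonneg fun i _ => hterm i))
    have hcoeff : ∀ i, ⟪b i, x⟫ = 0 := fun i => by
      rcases le_or_gt (g i) 0 with h | h
      · exact hnonpos i h
      · simpa [h.ne'] using hzero i (mem_univ i)
    ext1
    exact b.repr.injective (by ext i; simp [OrthonormalBasis.repr_apply_apply, hcoeff])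
  exact (LinearMap.finrank_le_finrank_of_injective hf).trans_eq
    (by rw [Module.finrank_fintype_fun_eq_card, Fintype.card_coe])

namespace LinearMap.IsSymmetric

variable [FiniteDimensional ℝ E] {T : E →ₗ[ℝ] E}

theorem inner_apply_self_sub_mul_norm_sq (hT : T.IsSymmetric) (t : ℝ) (x : E) :
    ⟪T x, x⟫ - t * ‖x‖ ^ 2 =
      ∑ i, (hT.eigenvalues rfl i - t) * ⟪hT.eigenvectorBasis rfl i, x⟫ ^ 2 := by
  set b := hT.eigenvectorBasis rfl
  rw [← b.sum_inner_mul_inner, ← real_inner_self_eq_norm_sq, ← b.sum_inner_mul_inner, mul_sum,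
    ← sum_sub_distrib]
  refine sum_congr rfl fun i _ => ?_
  rw [hT, apply_eigenvectorBasis, RCLike.ofReal_real_eq_id, id_eq, real_inner_smul_right,
    real_inner_comm x]
  ring

theorem finrank_le_card_eigenvalues_le (hT : T.IsSymmetric) (t : ℝ) (U : Submodule ℝ E)
    (hU : ∀ x ∈ U, ⟪T x, x⟫ ≤ t * ‖x‖ ^ 2) :
    finrank ℝ U ≤ #{i | hT.eigenvalues rfl i ≤ t} := by
  simpa only [sub_nonpos] using (hT.eigenvectorBasis rfl).finrank_le_card_filter_nonpos
    (fun i => hT.eigenvalues rfl i - t) U fun x hx => by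
      rw [← hT.inner_apply_self_sub_mul_norm_sq]
      exact sub_nonpos.2 (hU x hx)

theorem finrank_le_card_le_eigenvalues (hT : T.IsSymmetric) (t : ℝ) (U : Submodule ℝ E)
    (hU : ∀ x ∈ U, t * ‖x‖ ^ 2 ≤ ⟪T x, x⟫) :
    finrank ℝ U ≤ #{i | t ≤ hT.eigenvalues rfl i} := by
  simpa only [sub_nonpos] using (hT.eigenvectorBasis rfl).finrank_le_card_filter_nonpos
    (fun i => t - hT.eigenvalues rfl i) U fun x hx => by
      rw [← neg_nonneg, ← sum_neg_distrib]
      simp only [← neg_mul, neg_sub]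
      rw [← hT.inner_apply_self_sub_mul_norm_sq]
      exact sub_nonneg.2 (hU x hx)

theorem exists_hasEigenvalue_mem_Icc (hT : T.IsSymmetric) {a b : ℝ} (U V : Submodule ℝ E)
    (hU : ∀ x ∈ U, ⟪T x, x⟫ ≤ b * ‖x‖ ^ 2) (hV : ∀ x ∈ V, a * ‖x‖ ^ 2 ≤ ⟪T x, x⟫)
    (hUV : finrank ℝ E < finrank ℝ U + finrank ℝ V) :
    ∃ μ ∈ Set.Icc a b, Module.End.HasEigenvalue T μ := by
  obtain ⟨i, hi⟩ := inter_nonempty_of_card_lt_card_add_card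
    (subset_univ {i | hT.eigenvalues rfl i ≤ b}) (subset_univ {i | a ≤ hT.eigenvalues rfl i})
    (by
      rw [card_univ, Fintype.card_fin]
      exact hUV.trans_le (add_le_add (hT.finrank_le_card_eigenvalues_le b U hU)
        (hT.finrank_le_card_le_eigenvalues a V hV)))
  rw [mem_inter, mem_filter_univ, mem_filter_univ] at hi
  exact ⟨_, ⟨hi.2, hi.1⟩, hT.hasEigenvalue_eigenvalues rfl i⟩

end LinearMap.IsSymmetric

theorem sum_inner_sq_le [Fintype ι] (u : ι → E) (x : E) :
    ∑ i, ⟪u i, x⟫ ^ 2 ≤ (∑ i, ‖u i‖ ^ 2) * ‖x‖ ^ 2 := by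
  rw [sum_mul]
  refine sum_le_sum fun i _ => ?_
  rw [← mul_pow, sq_le_sq, abs_mul, abs_norm, abs_norm]
  exact abs_real_inner_le_norm _ _

theorem finrank_sub_card_le_finrank_orthogonal_span [FiniteDimensional ℝ E] (u : ι → E)
    (s : Finset ι) : finrank ℝ E - #s ≤ finrank ℝ (Submodule.span ℝ (u '' s))ᗮ := by
  classical
  have h := (Submodule.span ℝ (u '' s)).finrank_add_finrank_orthogonal
  have hs : finrank ℝ (Submodule.span ℝ (u '' s)) ≤ #s := by
    rw [← coe_image]
    exact (finrank_span_finset_le_card _).trans card_image_le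
  omega

theorem exists_pos_mul_norm_sq_le_sum_inner_sq [Fintype ι] [FiniteDimensional ℝ E] {w : ι → E}
    (hw : Submodule.span ℝ (Set.range w) = ⊤) :
    ∃ c > 0, ∀ x, c * ‖x‖ ^ 2 ≤ ∑ i, ⟪w i, x⟫ ^ 2 := by
  let f : E →ₗ[ℝ] EuclideanSpace ℝ ι :=
    (WithLp.linearEquiv 2 ℝ (ι → ℝ)).symm.toLinearMap ∘ₗ LinearMap.pi fun i => innerₛₗ ℝ (w i)
  have hf : LinearMap.ker f = ⊥ := by
    rw [LinearMap.ker_eq_bot']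
    intro x hx
    have hspan : Submodule.span ℝ (Set.range w) ≤ LinearMap.ker (innerₛₗ ℝ x) :=
      Submodule.span_le.2 <| Set.range_subset_iff.2 fun i => by
        simpa [f, real_inner_comm] using congrArg (· i) hx
    exact inner_self_eq_zero.1 (hspan (hw ▸ Submodule.mem_top))
  obtain ⟨K, -, hK⟩ := f.exists_antilipschitzWith hf
  obtain ⟨c, hc, hcf⟩ := antilipschitzWith_iff_exists_mul_le_norm.1 ⟨K, hK⟩
  refine ⟨c ^ 2, by positivity, fun x => ?_⟩
  have : ‖f x‖ ^ 2 = ∑ i, ⟪w i, x⟫ ^ 2 := by simp [f, EuclideanSpace.real_norm_sq_eq]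
  rw [← this, ← mul_pow]
  gcongr
  exact hcf x

theorem Matrix.hasEigenvalue_toLin'_iff {𝕜 n : Type*} [RCLike 𝕜] [Fintype n] [DecidableEq n]
    (A : Matrix n n 𝕜) (μ : 𝕜) :
    End.HasEigenvalue (toLin' A) μ ↔ End.HasEigenvalue (toEuclideanLin A) μ := by
  rw [End.hasEigenvalue_iff_mem_spectrum, End.hasEigenvalue_iff_mem_spectrum, spectrum_toLin',
    spectrum_toLpLin]

theorem Matrix.inner_toEuclideanLin_sum_smul_vecMulVec_apply {n : Type*} [Fintype ι] [Fintype n]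
    [DecidableEq n] (d : ι → ℝ) (w : ι → n → ℝ) (x y : EuclideanSpace ℝ n) :
    ⟪toEuclideanLin (∑ j, d j • vecMulVec (w j) (w j)) x, y⟫ =
      ∑ j, d j * (⟪WithLp.toLp 2 (w j), x⟫ * ⟪WithLp.toLp 2 (w j), y⟫) := by
  simp [toLpLin_apply, EuclideanSpace.inner_eq_star_dotProduct, vecMulVec_mulVec, dotProduct_sum,
    dotProduct_comm]

theorem Matrix.isSymmetric_toEuclideanLin_sum_smul_vecMulVec {n : Type*} [Fintype ι] [Fintype n]
    [DecidableEq n] (d : ι → ℝ) (w : ι → n → ℝ) :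
    (toEuclideanLin (∑ j, d j • vecMulVec (w j) (w j))).IsSymmetric := fun x y => by
  rw [real_inner_comm _ x, inner_toEuclideanLin_sum_smul_vecMulVec_apply,
    inner_toEuclideanLin_sum_smul_vecMulVec_apply]
  simp only [mul_comm]

theorem Matrix.exists_hasEigenvalue_sum_smul_vecMulVec_mem_Icc {m : ℕ} {d : Fin m → ℝ}
    (hd : Monotone d) (hd₀ : ∀ i, 0 ≤ d i) (w : Fin m → Fin m → ℝ) {c : ℝ}
    (hc : ∀ x : EuclideanSpace ℝ (Fin m), c * ‖x‖ ^ 2 ≤ ∑ i, ⟪WithLp.toLp 2 (w i), x⟫ ^ 2)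
    (j : Fin m) :
    ∃ μ ∈ Set.Icc (c * d j) ((∑ i, ‖WithLp.toLp 2 (w i)‖ ^ 2) * d j),
      End.HasEigenvalue (toLin' (∑ i, d i • vecMulVec (w i) (w i))) μ := by
  set u : Fin m → EuclideanSpace ℝ (Fin m) := fun i => WithLp.toLp 2 (w i)
  have hq (x : EuclideanSpace ℝ (Fin m)) :
      ⟪toEuclideanLin (∑ i, d i • vecMulVec (w i) (w i)) x, x⟫ = ∑ i, d i * ⟪u i, x⟫ ^ 2 := by
    simp only [inner_toEuclideanLin_sum_smul_vecMulVec_apply, sq, u]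
  have hzero {s : Finset (Fin m)} {x : EuclideanSpace ℝ (Fin m)}
      (hx : x ∈ (Submodule.span ℝ (u '' s))ᗮ) {i : Fin m} (hi : i ∈ s) : ⟪u i, x⟫ = 0 :=
    Submodule.inner_right_of_mem_orthogonal (Submodule.subset_span (Set.mem_image_of_mem u hi)) hx
  simp_rw [hasEigenvalue_toLin'_iff]
  refine (isSymmetric_toEuclideanLin_sum_smul_vecMulVec d w).exists_hasEigenvalue_mem_Icc
    (Submodule.span ℝ (u '' Ioi j))ᗮ (Submodule.span ℝ (u '' Iio j))ᗮ (fun x hx => ?_)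
    (fun x hx => ?_) ?_
  · calc ⟪toEuclideanLin (∑ i, d i • vecMulVec (w i) (w i)) x, x⟫
        _ = ∑ i, d i * ⟪u i, x⟫ ^ 2 := hq x
        _ ≤ d j * ∑ i, ⟪u i, x⟫ ^ 2 := sum_mul_sq_le_mul_sum_sq fun i hi =>
          hd (not_lt.1 fun hji => hi (hzero hx (mem_Ioi.2 hji)))
        _ ≤ d j * ((∑ i, ‖u i‖ ^ 2) * ‖x‖ ^ 2) :=
          mul_le_mul_of_nonneg_left (sum_inner_sq_le u x) (hd₀ j)
        _ = _ := by ring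
  · calc c * d j * ‖x‖ ^ 2
        _ = d j * (c * ‖x‖ ^ 2) := by ring
        _ ≤ d j * ∑ i, ⟪u i, x⟫ ^ 2 := mul_le_mul_of_nonneg_left (hc x) (hd₀ j)
        _ ≤ ∑ i, d i * ⟪u i, x⟫ ^ 2 := mul_sum_sq_le_sum_mul_sq fun i hi =>
          hd (not_lt.1 fun hij => hi (hzero hx (mem_Iio.2 hij)))
        _ = _ := (hq x).symm
  · have hU := finrank_sub_card_le_finrank_orthogonal_span u (Ioi j)
    have hV := finrank_sub_card_le_finrank_orthogonal_span u (Iio j)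
    rw [Fin.card_Ioi, Fin.card_Iio, finrank_euclideanSpace_fin] at *
    omega

/-- if `w 0, …, w (m-1) ∈ ℝᵐ` are linearly independent, then there is a
constant `C > 0` such that whenever the first coefficient `d` is positive and each
successive coefficient exceeds `C` times the previous one, the symmetric matrix
`W = ∑ i, d i • w i w iᵀ` has `m` distinct eigenvalues. -/
theorem stmt_7 (m : ℕ) (w : Fin m → (Fin m → ℝ)) (hw : LinearIndependent ℝ w) :
    ∃ C : ℝ, 0 < C ∧ ∀ d : Fin m → ℝ,
      (∀ i : Fin m, (i : ℕ) = 0 → 0 < d i) →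
      (∀ i : Fin m, ∀ hi : (i : ℕ) + 1 < m, C * d i < d ⟨(i : ℕ) + 1, hi⟩) →
      ∃ μ : Fin m → ℝ, Function.Injective μ ∧
        ∀ i, Module.End.HasEigenvalue
          (Matrix.toLin' (∑ j, d j • Matrix.vecMulVec (w j) (w j))) (μ i) := by
  set u : Fin m → EuclideanSpace ℝ (Fin m) := fun i => WithLp.toLp 2 (w i)
  have hu : Submodule.span ℝ (Set.range u) = ⊤ :=
    (hw.map' _ (WithLp.linearEquiv 2 ℝ (Fin m → ℝ)).symm.ker).span_eq_top_of_card_eq_finrank'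
      (by simp)
  obtain ⟨c, hc, hcoer⟩ := exists_pos_mul_norm_sq_le_sum_inner_sq hu
  set B := ∑ i, ‖u i‖ ^ 2
  refine ⟨B / c + 1, by positivity, fun d hd0 hstep => ?_⟩
  have hdpos := Fin.pos_of_mul_lt_add_one (by positivity) hd0 hstep
  have hdmono : StrictMono d := Fin.strictMono_of_lt_add_one fun i hi =>
    (le_mul_of_one_le_left (hdpos i).le (le_add_of_nonneg_left (by positivity))).trans_lt
      (hstep i hi)
  choose μ hμ hμW using fun j =>
    exists_hasEigenvalue_sum_smul_vecMulVec_mem_Icc hdmono.monotone (fun i => (hdpos i).le) w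
      hcoer j
  refine ⟨μ, (Fin.strictMono_of_lt_add_one fun i hi => ?_).injective, hμW⟩
  calc μ i ≤ B * d i := (hμ i).2
    _ < (B + c) * d i := by linarith [mul_pos hc (hdpos i)]
    _ = c * ((B / c + 1) * d i) := by field_simp
    _ < c * d ⟨i + 1, hi⟩ := mul_lt_mul_of_pos_left (hstep i hi) hc
    _ ≤ μ _ := (hμ _).1
end

section
/- Let G be a finite simple connected graph, M₀ a generalized Laplacian on G, λ_k a simple eigenvalue of M₀ with eigenvector f_k, and suppose f_k has at least one Urschel vertex (a vertex where f_k vanishes). Then there exists a symmetric matrix M₁ supported on G such that the vector f_k¹ = (M₀ − λ_k I)⁺(−M₁ f_k) is nonzero at at least one Urschel vertex of f_k, where (M₀ − λ_k I)⁺ denotes the Moore–Penrose pseudoinverse. -/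
/-!
Write `A = M₀ - λI`, `Z` for the zeros of `f` and `S` for its support. Since `ker A = ℝ f`
and `f` vanishes on `Z`, the Penrose identity `A (I - A⁺A) = 0` forces the `Z`-rows of `A⁺A`
to be those of the identity. If `A⁺` vanished on `Z × S`, these rows would read
`A⁺_ZZ A_ZZ = I` and `A⁺_ZZ A_ZS = 0`, hence `A_ZS = 0`; but connectivity gives an edge between
`Z` and `S`, where `A` is negative. So `A⁺(z, s) ≠ 0` for some `z ∈ Z`, `s ∈ S`, and the
perturbation `M₁ = -E_ss` yields `(A⁺(-M₁ f))(z) = A⁺(z, s) f(s) ≠ 0`. As the pseudoinverse is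
unique, this one `M₁` serves every `N`.
-/

open Matrix

def IsGenLap {V : Type*} (G : SimpleGraph V) (M : Matrix V V ℝ) : Prop :=
  M.IsSymm ∧ (∀ u v, G.Adj u v → M u v < 0) ∧ ∀ u v, u ≠ v → ¬G.Adj u v → M u v = 0

def SupportedOn {V : Type*} (G : SimpleGraph V) (M : Matrix V V ℝ) : Prop :=
  ∀ u v, u ≠ v → ¬G.Adj u v → M u v = 0

/-- `N` is the Moore–Penrose pseudoinverse of `A` (the four Penrose conditions). -/
def IsMoorePenrose {k : Type*} [Fintype k] (A N : Matrix k k ℝ) : Prop :=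
  A * N * A = A ∧ N * A * N = N ∧ (A * N)ᵀ = A * N ∧ (N * A)ᵀ = N * A

theorem Matrix.submatrix_mul_of_forall_apply_eq_zero {V ι κ α : Type*} [Fintype V]
    [NonUnitalNonAssocSemiring α] (P Q : Matrix V V α) (p : V → Prop) [DecidablePred p]
    (r : ι → V) (c : κ → V) (hP : ∀ i x, ¬p x → P (r i) x = 0) :
    (P * Q).submatrix r c =
      P.submatrix r (Subtype.val : Subtype p → V) * Q.submatrix Subtype.val c := by
  ext i j
  have hout : ∑ x : {x // ¬p x}, P (r i) x * Q x (c j) = 0 :=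
    Finset.sum_eq_zero fun x _ => by rw [hP i x x.2, zero_mul]
  simp only [submatrix_apply, mul_apply]
  rw [← Fintype.sum_subtype_add_sum_subtype p, hout, add_zero]
  rfl

theorem SimpleGraph.Connected.exists_adj_mem_not_mem {V : Type*} {G : SimpleGraph V}
    (hG : G.Connected) {S : Set V} {a b : V} (ha : a ∈ S) (hb : b ∉ S) :
    ∃ u v, G.Adj u v ∧ u ∈ S ∧ v ∉ S := by
  obtain ⟨d, -, hd⟩ := (hG.preconnected a b).some.exists_boundary_dart S ha hb
  exact ⟨d.fst, d.snd, d.adj, hd⟩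

theorem ker_toLin'_sub_smul_one_eq_span_singleton {n : Type*} [Fintype n] [DecidableEq n]
    {M : Matrix n n ℝ} {μ : ℝ} {f : n → ℝ} (hf : f ≠ 0) (heig : M *ᵥ f = μ • f)
    (hsimple : Module.finrank ℝ (Module.End.eigenspace (toLin' M) μ) = 1) :
    LinearMap.ker (toLin' (M - μ • 1)) = ℝ ∙ f := by
  have hker : LinearMap.ker (toLin' (M - μ • 1)) = Module.End.eigenspace (toLin' M) μ := by
    ext x
    rw [LinearMap.mem_ker, Module.End.mem_eigenspace_iff, toLin'_apply, toLin'_apply,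
      sub_mulVec, smul_mulVec, one_mulVec, sub_eq_zero]
  rw [hker]
  refine eq_span_singleton_of_mem_of_finrank_eq_one hsimple ?_ hf
  rwa [Module.End.mem_eigenspace_iff, toLin'_apply]

namespace IsMoorePenrose

variable {k : Type*} [Fintype k] {A N N' : Matrix k k ℝ}

theorem unique (h : IsMoorePenrose A N) (h' : IsMoorePenrose A N') : N = N' := by
  obtain ⟨h1, h2, h3, h4⟩ := h
  obtain ⟨h1', h2', h3', h4'⟩ := h'
  have hAN : A * N = A * N' :=
    calc A * N = (A * N' * A) * N := by rw [h1']
    _ = (A * N')ᵀ * (A * N)ᵀ := by rw [h3, h3', mul_assoc]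
    _ = (A * N * A * N')ᵀ := by rw [← transpose_mul, mul_assoc (A * N)]
    _ = A * N' := by rw [h1, h3']
  have hNA : N * A = N' * A :=
    calc N * A = N * (A * N' * A) := by rw [h1']
    _ = (N * A)ᵀ * (N' * A)ᵀ := by rw [h4, h4', ← mul_assoc, ← mul_assoc, mul_assoc (N * A)]
    _ = (N' * (A * N * A))ᵀ := by rw [← transpose_mul, mul_assoc, mul_assoc]
    _ = N' * A := by rw [h1, h4']
  calc N = N * A * N := h2.symm
  _ = N' * (A * N') := by rw [hNA, mul_assoc, hAN]
  _ = N' := by rw [← mul_assoc, h2']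

theorem mul_apply_of_ker_le_span [DecidableEq k] (hN : IsMoorePenrose A N) {f : k → ℝ}
    (hker : LinearMap.ker (toLin' A) ≤ ℝ ∙ f) {v : k} (hv : f v = 0) (j : k) :
    (N * A) v j = (1 : Matrix k k ℝ) v j := by
  have hAQ : A * (1 - N * A) = 0 := by rw [mul_sub, mul_one, ← mul_assoc, hN.1, sub_self]
  have hcol : (1 - N * A).col j ∈ ℝ ∙ f := hker <| by
    rw [LinearMap.mem_ker, toLin'_apply, ← mulVec_single_one, mulVec_mulVec, hAQ, zero_mulVec]
  obtain ⟨c, hc⟩ := Submodule.mem_span_singleton.mp hcol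
  have hQv := congrFun hc v
  rw [Pi.smul_apply, hv, smul_zero, col_apply, Matrix.sub_apply] at hQv
  linarith

theorem exists_apply_ne_zero_of_ker_le_span [DecidableEq k] (hN : IsMoorePenrose A N)
    {f : k → ℝ} (hker : LinearMap.ker (toLin' A) ≤ ℝ ∙ f) {z s : k} (hz : f z = 0)
    (hs : f s ≠ 0) (hA : A z s ≠ 0) : ∃ z' s', f z' = 0 ∧ f s' ≠ 0 ∧ N z' s' ≠ 0 := by
  by_contra! hN0
  have hNZ : ∀ (i : {v // f v = 0}) x, ¬f x = 0 → N i x = 0 := fun i x hx => hN0 _ _ i.2 hx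
  have hZZ : (N.submatrix Subtype.val Subtype.val : Matrix {v // f v = 0} {v // f v = 0} ℝ) *
      A.submatrix Subtype.val Subtype.val = 1 := by
    refine (submatrix_mul_of_forall_apply_eq_zero N A (f · = 0) _ _ hNZ).symm.trans ?_
    rw [← submatrix_one _ Subtype.val_injective]
    ext i j
    exact hN.mul_apply_of_ker_le_span hker i.2 j
  have hZS : (N.submatrix Subtype.val Subtype.val : Matrix {v // f v = 0} {v // f v = 0} ℝ) *
      (A.submatrix Subtype.val Subtype.val : Matrix {v // f v = 0} {v // f v ≠ 0} ℝ) = 0 := by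
    refine (submatrix_mul_of_forall_apply_eq_zero N A (f · = 0) _ _ hNZ).symm.trans ?_
    ext i j
    rw [submatrix_apply, hN.mul_apply_of_ker_le_span hker i.2,
      one_apply_ne (ne_of_apply_ne f (i.2.trans_ne j.2.symm)), Matrix.zero_apply]
  have hAZS : (A.submatrix Subtype.val Subtype.val : Matrix {v // f v = 0} {v // f v ≠ 0} ℝ)
      = 0 := by
    rw [← Matrix.one_mul (A.submatrix _ _), ← mul_eq_one_comm.mp hZZ, Matrix.mul_assoc, hZS,
      Matrix.mul_zero]
  exact hA (congrFun (congrFun hAZS ⟨z, hz⟩) ⟨s, hs⟩)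

end IsMoorePenrose

theorem neg_diagonal_single_neg_one_mulVec {n : Type*} [Fintype n] [DecidableEq n]
    (f : n → ℝ) (s : n) : -(diagonal (Pi.single s (-1)) *ᵥ f) = Pi.single s (f s) := by
  ext v
  rw [Pi.neg_apply, mulVec_diagonal]
  rcases eq_or_ne v s with rfl | h
  · simp
  · simp [h]

/-- if `λ` is a simple eigenvalue of a generalized Laplacian `M₀` on a
finite connected simple graph `G`, with eigenvector `f` vanishing at some vertex, then
there is a symmetric matrix `M₁` supported on `G` such that
`(M₀ - λI)⁺ (-(M₁ f))` is nonzero at some zero of `f`. -/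
theorem stmt_12 {V : Type*} [Fintype V] [DecidableEq V] (G : SimpleGraph V)
    (hconn : G.Connected) (M₀ : Matrix V V ℝ) (hM₀ : IsGenLap G M₀)
    (lam : ℝ) (f : V → ℝ) (hf : f ≠ 0) (heig : M₀.mulVec f = lam • f)
    (hsimple : Module.finrank ℝ
      ↥(Module.End.eigenspace (Matrix.toLin' M₀) lam) = 1)
    (hzero : ∃ v, f v = 0) :
    ∃ M₁ : Matrix V V ℝ, M₁.IsSymm ∧ SupportedOn G M₁ ∧
      ∀ N : Matrix V V ℝ, IsMoorePenrose (M₀ - lam • 1) N →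
        ∃ v, f v = 0 ∧ N.mulVec (-(M₁.mulVec f)) v ≠ 0 := by
  by_cases hex : ∃ N₀, IsMoorePenrose (M₀ - lam • 1) N₀
  swap
  · exact ⟨0, isSymm_zero, fun _ _ _ _ => rfl, fun N hN => (hex ⟨N, hN⟩).elim⟩
  obtain ⟨N₀, hN₀⟩ := hex
  obtain ⟨a, ha⟩ := hzero
  obtain ⟨b, hb⟩ := Function.ne_iff.mp hf
  obtain ⟨z, s, hadj, hz, hs⟩ := hconn.exists_adj_mem_not_mem (S := {v | f v = 0}) ha hb
  have hAzs : (M₀ - lam • 1) z s ≠ 0 := by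
    rw [Matrix.sub_apply, Matrix.smul_apply, one_apply_ne hadj.ne, smul_zero, sub_zero]
    exact (hM₀.2.1 z s hadj).ne
  obtain ⟨z', s', hz', hs', hN₀zs⟩ := hN₀.exists_apply_ne_zero_of_ker_le_span
    (ker_toLin'_sub_smul_one_eq_span_singleton hf heig hsimple).le hz hs hAzs
  refine ⟨diagonal (Pi.single s' (-1)), isSymm_diagonal _,
    fun u v huv _ => diagonal_apply_ne _ huv, fun N hN => ⟨z', hz', ?_⟩⟩
  rw [hN.unique hN₀, neg_diagonal_single_neg_one_mulVec, mulVec_single]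
  exact mul_ne_zero hN₀zs hs'
end

section
/- Let G be a finite simple graph, M₀ a generalized Laplacian, λ an eigenvalue with eigenvector f. If v is a deep Urschel vertex of f (i.e., f(v) = 0 and f(u) = 0 for every neighbour u of v), then for every symmetric matrix M₁ supported on G we have (M₁ f)(v) = 0. Consequently, the subspace W = {M₁ f : M₁ symmetric, supported on G} ⊆ ℝ^{V_G} equals the span of the standard basis vectors e_v for v ranging over the non-Urschel vertices of f and the shallow Urschel vertices of f. -/
/-!
For `M₁` supported on `G`, `(M₁ f) v` only involves the values of `f` on the closed
neighbourhood of `v`; this gives the first claim and `W ⊆ span`. Conversely `e_v ∈ W`: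
take `M₁ = (f v)⁻¹ E_vv` when `f v ≠ 0`, and `M₁ = (f u)⁻¹ (E_vu + E_uv)` for a neighbour `u`
with `f u ≠ 0` when `v` is a shallow Urschel vertex.
-/

open Matrix

lemma Pi.mem_span_image_single_one_iff {ι R : Type*} [Finite ι] [DecidableEq ι] [Semiring R]
    {s : Set ι} {x : ι → R} :
    x ∈ Submodule.span R ((fun i ↦ (Pi.single i 1 : ι → R)) '' s) ↔ ∀ i, x i ≠ 0 → i ∈ s := by
  have hb : (fun i ↦ (Pi.single i 1 : ι → R)) = Pi.basisFun R ι := funext fun i ↦ by simp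
  rw [hb, Module.Basis.mem_span_image]
  simp [Set.subset_def]

namespace SupportedOn

variable {V : Type*} {G : SimpleGraph V}

lemma add {M N : Matrix V V ℝ} (hM : SupportedOn G M) (hN : SupportedOn G N) :
    SupportedOn G (M + N) := fun u v huv hadj ↦ by
  simp [hM u v huv hadj, hN u v huv hadj]

lemma smul (c : ℝ) {M : Matrix V V ℝ} (hM : SupportedOn G M) : SupportedOn G (c • M) :=
  fun u v huv hadj ↦ by simp [hM u v huv hadj]

lemma diagonal [DecidableEq V] (d : V → ℝ) : SupportedOn G (diagonal d) :=
  fun _ _ huv _ ↦ diagonal_apply_ne d huv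

lemma single_of_adj [DecidableEq V] {u v : V} (h : G.Adj u v) (c : ℝ) :
    SupportedOn G (single u v c) := by
  rintro a b - hab
  apply single_apply_of_ne
  rintro ⟨rfl, rfl⟩
  exact hab h

lemma mulVec_apply_eq_zero [Fintype V] {M : Matrix V V ℝ} (hM : SupportedOn G M)
    {f : V → ℝ} {v : V} (hv : f v = 0) (hnbr : ∀ u, G.Adj u v → f u = 0) :
    (M *ᵥ f) v = 0 := by
  refine Finset.sum_eq_zero fun u _ ↦ ?_
  by_cases huv : v = u
  · simp [← huv, hv]
  by_cases hadj : G.Adj v u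
  · simp [hnbr u hadj.symm]
  · simp [hM v u huv hadj]

end SupportedOn

section

variable {V : Type*} (G : SimpleGraph V)

def symmetricSupportedOn : Submodule ℝ (Matrix V V ℝ) where
  carrier := {M | M.IsSymm ∧ SupportedOn G M}
  zero_mem' := ⟨isSymm_zero, fun _ _ _ _ ↦ rfl⟩
  add_mem' := fun ⟨hM, hMG⟩ ⟨hN, hNG⟩ ↦ ⟨hM.add hN, hMG.add hNG⟩
  smul_mem' := fun c _ ⟨hM, hMG⟩ ↦ ⟨hM.smul c, hMG.smul c⟩

variable [Fintype V]

def symmetricSupportedOnMulVec (f : V → ℝ) : Submodule ℝ (V → ℝ) :=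
  (symmetricSupportedOn G).map ((mulVecBilin ℝ ℝ).flip f)

variable {G} [DecidableEq V] {f : V → ℝ}

lemma single_mem_symmetricSupportedOnMulVec_of_ne_zero {v : V} (hv : f v ≠ 0) :
    Pi.single v 1 ∈ symmetricSupportedOnMulVec G f := by
  refine ⟨diagonal (Pi.single v (f v)⁻¹), ⟨isSymm_diagonal _, .diagonal _⟩, ?_⟩
  ext w
  rcases eq_or_ne w v with rfl | hw
  · simp [mulVec_diagonal, inv_mul_cancel₀ hv]
  · simp [mulVec_diagonal, hw]

-- The `E_uv` summand of the witness contributes `f v • e_u = 0`.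
lemma single_mem_symmetricSupportedOnMulVec_of_adj {u v : V} (hv : f v = 0) (hadj : G.Adj v u)
    (hu : f u ≠ 0) : Pi.single v 1 ∈ symmetricSupportedOnMulVec G f := by
  refine ⟨single v u (f u)⁻¹ + single u v (f u)⁻¹, ⟨?_, ?_⟩, ?_⟩
  · simp [IsSymm, transpose_add, add_comm]
  · exact (SupportedOn.single_of_adj hadj _).add (SupportedOn.single_of_adj hadj.symm _)
  · ext w
    simp [single_mulVec, hv, inv_mul_cancel₀ hu, Function.update_apply,
      Pi.single_apply]

lemma symmetricSupportedOnMulVec_le_span :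
    symmetricSupportedOnMulVec G f ≤ Submodule.span ℝ ((fun v ↦ (Pi.single v 1 : V → ℝ)) ''
      {v | f v ≠ 0 ∨ (f v = 0 ∧ ∃ u, G.Adj v u ∧ f u ≠ 0)}) := by
  rintro _ ⟨M, ⟨-, hM⟩, rfl⟩
  rw [Pi.mem_span_image_single_one_iff]
  intro v hMv
  by_contra hdeep
  have hv : f v = 0 := not_not.mp fun h ↦ hdeep (Or.inl h)
  refine hMv (hM.mulVec_apply_eq_zero hv fun u hadj ↦ ?_)
  by_contra hu
  exact hdeep (Or.inr ⟨hv, u, hadj.symm, hu⟩)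

lemma span_le_symmetricSupportedOnMulVec :
    Submodule.span ℝ ((fun v ↦ (Pi.single v 1 : V → ℝ)) ''
      {v | f v ≠ 0 ∨ (f v = 0 ∧ ∃ u, G.Adj v u ∧ f u ≠ 0)}) ≤ symmetricSupportedOnMulVec G f := by
  rw [Submodule.span_le]
  rintro _ ⟨v, hv | ⟨hv, u, hadj, hu⟩, rfl⟩
  · exact single_mem_symmetricSupportedOnMulVec_of_ne_zero hv
  · exact single_mem_symmetricSupportedOnMulVec_of_adj hv hadj hu

end

theorem stmt_13_general {V : Type*} [Fintype V] [DecidableEq V] (G : SimpleGraph V)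
    (f : V → ℝ) :
    (∀ v, f v = 0 → (∀ u, G.Adj u v → f u = 0) →
      ∀ M₁ : Matrix V V ℝ, M₁.IsSymm → SupportedOn G M₁ → M₁.mulVec f v = 0) ∧
    {x : V → ℝ | ∃ M₁ : Matrix V V ℝ, M₁.IsSymm ∧ SupportedOn G M₁ ∧ x = M₁.mulVec f}
      = ↑(Submodule.span ℝ ((fun v => (Pi.single v 1 : V → ℝ)) ''
          {v | f v ≠ 0 ∨ (f v = 0 ∧ ∃ u, G.Adj v u ∧ f u ≠ 0)})) := by
  refine ⟨fun v hv hnbr M₁ _ hM₁ ↦ hM₁.mulVec_apply_eq_zero hv hnbr, ?_⟩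
  have hW : {x : V → ℝ | ∃ M₁ : Matrix V V ℝ, M₁.IsSymm ∧ SupportedOn G M₁ ∧ x = M₁.mulVec f} =
      symmetricSupportedOnMulVec G f := by
    ext x
    simp [symmetricSupportedOnMulVec, symmetricSupportedOn, eq_comm, and_assoc]
  rw [hW, SetLike.coe_set_eq]
  exact le_antisymm symmetricSupportedOnMulVec_le_span span_le_symmetricSupportedOnMulVec

/-- if `v` is a deep Urschel vertex of the eigenvector `f` (i.e. `f` and
all its neighbours vanish at `v`), then `(M₁ f) v = 0` for every symmetric `M₁`
supported on `G`; consequently the subspace `{M₁ f}` equals the span of the standard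
basis vectors at the non-Urschel and shallow Urschel vertices of `f`. -/
theorem stmt_13 {V : Type*} [Fintype V] [DecidableEq V] (G : SimpleGraph V)
    (M₀ : Matrix V V ℝ) (hM₀ : IsGenLap G M₀) (lam : ℝ) (f : V → ℝ) (hf : f ≠ 0)
    (heig : M₀.mulVec f = lam • f) :
    (∀ v, f v = 0 → (∀ u, G.Adj u v → f u = 0) →
      ∀ M₁ : Matrix V V ℝ, M₁.IsSymm → SupportedOn G M₁ → M₁.mulVec f v = 0) ∧
    {x : V → ℝ | ∃ M₁ : Matrix V V ℝ, M₁.IsSymm ∧ SupportedOn G M₁ ∧ x = M₁.mulVec f}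
      = ↑(Submodule.span ℝ ((fun v => (Pi.single v 1 : V → ℝ)) ''
          {v | f v ≠ 0 ∨ (f v = 0 ∧ ∃ u, G.Adj v u ∧ f u ≠ 0)})) :=
  stmt_13_general G f
end
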